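/- arXiv:2605.30648 — 2 statements merged into one kernel-verified Lean document; each statement's English description precedes it below -/
import Mathlib

section
/- Let f : ℝᴰ → ℝ be twice differentiable and nonnegative, with ‖∇²f(θ)‖_{p→q} ≤ H₀ + H₁·f(θ) for all θ (H₀, H₁ ≥ 0, 1/p + 1/q = 1). Then for all x, y with ‖y − x‖_p ≤ 1/√H₁: ‖∇f(y) − ∇f(x)‖_q ≤ e·(H₀ + H₁·f(x))·‖y − x‖_p. -/
open scoped BigOperators

noncomputable def lpNorm (p : ENNReal) {ι : Type*} [Fintype ι] (x : ι → ℝ) : ℝ :=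
  ‖(WithLp.equiv p (ι → ℝ)).symm x‖

noncomputable def opNorm (p q : ENNReal) {ι κ : Type*} [Fintype ι] [Fintype κ]
    (A : Matrix ι κ ℝ) : ℝ :=
  sSup {c | ∃ x : κ → ℝ, lpNorm p x ≤ 1 ∧ c = lpNorm q (A.mulVec x)}

noncomputable def dotCLM {n : ℕ} (v : Fin n → ℝ) : (Fin n → ℝ) →L[ℝ] ℝ :=
  LinearMap.toContinuousLinearMap (∑ i, v i • (LinearMap.proj i : (Fin n → ℝ) →ₗ[ℝ] ℝ))

noncomputable def mulVecCLM {m n : ℕ} (M : Matrix (Fin m) (Fin n) ℝ) :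
    (Fin n → ℝ) →L[ℝ] (Fin m → ℝ) :=
  LinearMap.toContinuousLinearMap M.mulVecLin

/-!
Write `F = H₀ + H₁ f ≥ 0`. Along a line `t ↦ θ + t u`, Hölder's inequality and the Hessian bound
give `F'' ≤ b² F` with `b = √H₁ ‖u‖_p`. A function that is nonnegative on a half-line and satisfies
`F'' ≤ b² F` there cannot have `F'(0) > b F(0)`: going backwards, `F' - b F` would stay above its
positive value at `0`, and `F` would become negative. So `F' ≤ b F` along every line, whence
`F z ≤ F x · exp (√H₁ ‖z - x‖_p) ≤ e · F x` on the segment from `x` to `y`, and the mean value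
inequality for `∇f`, with `‖∇²f(z) (y - x)‖_q ≤ F z · ‖y - x‖_p`, concludes.
-/

open Real Set ENNReal
open scoped Matrix

lemma dotCLM_apply {n : ℕ} (v u : Fin n → ℝ) : dotCLM v u = ∑ i, v i * u i := by
  simp [dotCLM]

lemma dotCLM_comm {n : ℕ} (v u : Fin n → ℝ) : dotCLM v u = dotCLM u v := by
  simp only [dotCLM_apply, mul_comm]

section lpNorm

variable {ι : Type*} [Fintype ι]

lemma lpNorm_eq_norm_toLp (p : ℝ≥0∞) (x : ι → ℝ) : lpNorm p x = ‖WithLp.toLp p x‖ := rfl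

variable {p : ℝ≥0∞} [Fact (1 ≤ p)]

lemma lpNorm_nonneg (x : ι → ℝ) : 0 ≤ lpNorm p x := norm_nonneg _

lemma lpNorm_smul (c : ℝ) (x : ι → ℝ) : lpNorm p (c • x) = |c| * lpNorm p x := by
  simp [lpNorm_eq_norm_toLp, WithLp.toLp_smul, norm_smul]

lemma lpNorm_eq_zero {x : ι → ℝ} : lpNorm p x = 0 ↔ x = 0 := by
  simp [lpNorm_eq_norm_toLp]

end lpNorm

lemma abs_sum_mul_le_lpNorm_one_mul_lpNorm_top {ι : Type*} [Fintype ι] (u w : ι → ℝ) :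
    |∑ i, u i * w i| ≤ lpNorm 1 u * lpNorm ∞ w := by
  rw [lpNorm_eq_norm_toLp 1, PiLp.norm_eq_of_L1, Finset.sum_mul]
  refine (Finset.abs_sum_le_sum_abs _ _).trans (Finset.sum_le_sum fun i _ => ?_)
  rw [abs_mul]
  exact mul_le_mul_of_nonneg_left (PiLp.norm_apply_le (WithLp.toLp ∞ w) i) (abs_nonneg _)

theorem abs_sum_mul_le_lpNorm_mul_lpNorm {ι : Type*} [Fintype ι] (p q : ℝ≥0∞)
    [p.HolderConjugate q] (u w : ι → ℝ) :
    |∑ i, u i * w i| ≤ lpNorm p u * lpNorm q w := by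
  by_cases hp : p = ∞
  · obtain rfl : q = 1 := (HolderConjugate.eq_top_iff_eq_one p q).mp hp
    subst hp
    simpa only [mul_comm] using abs_sum_mul_le_lpNorm_one_mul_lpNorm_top w u
  by_cases hq : q = ∞
  · obtain rfl : p = 1 := (HolderConjugate.eq_top_iff_eq_one q p).mp hq
    subst hq
    exact abs_sum_mul_le_lpNorm_one_mul_lpNorm_top u w
  have hpq' := HolderConjugate.toReal_of_ne_top hp hq
  refine (Finset.abs_sum_le_sum_abs _ _).trans ?_
  simpa [lpNorm_eq_norm_toLp, PiLp.norm_eq_sum hpq'.pos, PiLp.norm_eq_sum hpq'.symm.pos, abs_mul]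
    using Real.inner_le_Lp_mul_Lq Finset.univ (fun i => |u i|) (fun i => |w i|) hpq'

section opNorm

variable {ι κ : Type*} [Fintype ι] [Fintype κ] {p q : ℝ≥0∞} [Fact (1 ≤ p)] [Fact (1 ≤ q)]

lemma bddAbove_lpNorm_mulVec (A : Matrix ι κ ℝ) :
    BddAbove {c | ∃ x : κ → ℝ, lpNorm p x ≤ 1 ∧ c = lpNorm q (A *ᵥ x)} := by
  let T : WithLp p (κ → ℝ) →L[ℝ] WithLp q (ι → ℝ) := LinearMap.toContinuousLinearMap
    ((WithLp.linearEquiv q ℝ (ι → ℝ)).symm.toLinearMap ∘ₗ A.mulVecLin ∘ₗ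
      (WithLp.linearEquiv p ℝ (κ → ℝ)).toLinearMap)
  refine ⟨‖T‖, ?_⟩
  rintro c ⟨x, hx, rfl⟩
  calc lpNorm q (A *ᵥ x) = ‖T (WithLp.toLp p x)‖ := rfl
    _ ≤ ‖T‖ * lpNorm p x := T.le_opNorm _
    _ ≤ ‖T‖ := mul_le_of_le_one_right (norm_nonneg T) hx

theorem lpNorm_mulVec_le_opNorm_mul (A : Matrix ι κ ℝ) (x : κ → ℝ) :
    lpNorm q (A *ᵥ x) ≤ opNorm p q A * lpNorm p x := by
  rcases (lpNorm_nonneg (p := p) x).eq_or_lt with hx | hx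
  · obtain rfl : x = 0 := lpNorm_eq_zero.mp hx.symm
    simp [lpNorm_eq_norm_toLp]
  have hunit : lpNorm p ((lpNorm p x)⁻¹ • x) = 1 := by
    rw [lpNorm_smul, abs_inv, abs_of_pos hx, inv_mul_cancel₀ hx.ne']
  calc lpNorm q (A *ᵥ x) = lpNorm p x * lpNorm q (A *ᵥ ((lpNorm p x)⁻¹ • x)) := by
        rw [Matrix.mulVec_smul, lpNorm_smul, abs_inv, abs_of_pos hx, mul_inv_cancel_left₀ hx.ne']
    _ ≤ lpNorm p x * opNorm p q A :=
        mul_le_mul_of_nonneg_left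
          (le_csSup (bddAbove_lpNorm_mulVec A) ⟨_, hunit.le, rfl⟩) hx.le
    _ = opNorm p q A * lpNorm p x := mul_comm _ _

end opNorm

theorem dotCLM_mulVec_le_opNorm_mul_sq {D : ℕ} {p q : ℝ≥0∞} [p.HolderConjugate q]
    (M : Matrix (Fin D) (Fin D) ℝ) (u : Fin D → ℝ) :
    dotCLM u (M *ᵥ u) ≤ opNorm p q M * lpNorm p u ^ 2 := by
  have : Fact (1 ≤ p) := ⟨HolderConjugate.one_le p q⟩
  have : Fact (1 ≤ q) := ⟨HolderConjugate.one_le q p⟩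
  calc dotCLM u (M *ᵥ u) ≤ lpNorm p u * lpNorm q (M *ᵥ u) :=
        (le_abs_self _).trans (dotCLM_apply u _ ▸ abs_sum_mul_le_lpNorm_mul_lpNorm p q _ _)
    _ ≤ lpNorm p u * (opNorm p q M * lpNorm p u) :=
        mul_le_mul_of_nonneg_left (lpNorm_mulVec_le_opNorm_mul M u) (lpNorm_nonneg u)
    _ = opNorm p q M * lpNorm p u ^ 2 := by ring

lemma hasDerivAt_mul_exp_neg_mul {h : ℝ → ℝ} {h' c t : ℝ} (hd : HasDerivAt h h' t) :
    HasDerivAt (fun t => h t * exp (-(c * t))) ((h' - c * h t) * exp (-(c * t))) t := by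
  have he : HasDerivAt (fun t => exp (-(c * t))) (exp (-(c * t)) * -(c * 1)) t :=
    ((hasDerivAt_id' t).const_mul c).neg.exp
  exact (hd.mul he).congr_deriv (by ring)

lemma antitoneOn_mul_exp_neg_of_deriv_le {h h' : ℝ → ℝ} {c : ℝ} {s : Set ℝ} (hs : Convex ℝ s)
    (hd : ∀ t ∈ s, HasDerivAt h (h' t) t) (hle : ∀ t ∈ s, h' t ≤ c * h t) :
    AntitoneOn (fun t => h t * exp (-(c * t))) s := by
  have hW := fun t ht => hasDerivAt_mul_exp_neg_mul (c := c) (hd t ht)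
  refine antitoneOn_of_hasDerivWithinAt_nonpos hs
    (fun t ht => (hW t ht).continuousAt.continuousWithinAt)
    (fun t ht => (hW t (interior_subset ht)).hasDerivWithinAt) fun t ht => ?_
  have := hle t (interior_subset ht)
  exact mul_nonpos_of_nonpos_of_nonneg (by linarith) (exp_pos _).le

theorem deriv_le_mul_of_nonneg_of_deriv2_le {ψ ψ' ψ'' : ℝ → ℝ} {b : ℝ} (hb : 0 ≤ b)
    (hψ : ∀ t ∈ Iic 0, HasDerivAt ψ (ψ' t) t) (hψ' : ∀ t ∈ Iic 0, HasDerivAt ψ' (ψ'' t) t)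
    (hnn : ∀ t ∈ Iic 0, 0 ≤ ψ t) (hψ'' : ∀ t ∈ Iic 0, ψ'' t ≤ b ^ 2 * ψ t) :
    ψ' 0 ≤ b * ψ 0 := by
  by_contra! hcon
  set v₀ := ψ' 0 - b * ψ 0
  have hv₀ : 0 < v₀ := sub_pos.mpr hcon
  -- `v := ψ' - b ψ` satisfies `v' ≤ -b v`, so it can only grow when running backwards in time.
  have hv : AntitoneOn (fun t => (ψ' t - b * ψ t) * exp (-(-b * t))) (Iic 0) :=
    antitoneOn_mul_exp_neg_of_deriv_le (convex_Iic 0)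
      (fun t ht => (hψ' t ht).sub ((hψ t ht).const_mul b)) fun t ht => by
        nlinarith [hψ'' t ht]
  have hψ'_ge : ∀ t ∈ Iic (0 : ℝ), v₀ ≤ ψ' t := by
    intro t ht
    have hmono : v₀ ≤ (ψ' t - b * ψ t) * exp (b * t) := by
      have := hv ht self_mem_Iic ht
      simp only [mul_zero, neg_zero, exp_zero, mul_one, neg_mul, neg_neg] at this
      exact this
    have hexp : exp (b * t) ≤ 1 := exp_le_one_iff.mpr (mul_nonpos_of_nonneg_of_nonpos hb ht)
    have hpos : 0 < ψ' t - b * ψ t := pos_of_mul_pos_left (hv₀.trans_le hmono) (exp_pos _).le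
    nlinarith [hnn t ht]
  have hlin := (convex_Iic (0 : ℝ)).mul_sub_le_image_sub_of_le_deriv
    (fun t ht => (hψ t ht).continuousAt.continuousWithinAt)
    (fun t ht => (hψ t (interior_subset ht)).differentiableAt.differentiableWithinAt)
    (fun t ht => (hψ t (interior_subset ht)).deriv ▸ hψ'_ge t (interior_subset ht))
  set T := -(ψ 0 / v₀) - 1 with hT_def
  have hT : T ≤ 0 := by have := div_nonneg (hnn 0 self_mem_Iic) hv₀.le; linarith
  have hvT : v₀ * T = -ψ 0 - v₀ := by rw [hT_def]; field_simp
  have := hlin T hT 0 self_mem_Iic hT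
  linarith [hnn T hT]

lemma hasDerivAt_comp_add_smul {E F : Type*} [NormedAddCommGroup E] [NormedSpace ℝ E]
    [NormedAddCommGroup F] [NormedSpace ℝ F] {φ : E → F} {φ' : E →L[ℝ] F} {θ u : E} {t : ℝ}
    (h : HasFDerivAt φ φ' (θ + t • u)) : HasDerivAt (fun s : ℝ => φ (θ + s • u)) (φ' u) t := by
  have hline : HasDerivAt (fun s : ℝ => θ + s • u) u t := by
    simpa using ((hasDerivAt_id t).smul_const u).const_add θ
  exact h.comp_hasDerivAt t hline

section Smoothness

variable {D : ℕ} {p q : ℝ≥0∞} {f : (Fin D → ℝ) → ℝ} {g : (Fin D → ℝ) → (Fin D → ℝ)}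
  {Hess : (Fin D → ℝ) → Matrix (Fin D) (Fin D) ℝ} {H0 H1 : ℝ}

theorem mul_dotCLM_le_of_opNorm_hessian_le [p.HolderConjugate q] (hfnn : ∀ θ, 0 ≤ f θ)
    (hgrad : ∀ θ, HasFDerivAt f (dotCLM (g θ)) θ)
    (hhess : ∀ θ, HasFDerivAt g (mulVecCLM (Hess θ)) θ) (hH0 : 0 ≤ H0) (hH1 : 0 ≤ H1)
    (hnus : ∀ θ, opNorm p q (Hess θ) ≤ H0 + H1 * f θ) (θ u : Fin D → ℝ) :
    H1 * dotCLM (g θ) u ≤ √H1 * lpNorm p u * (H0 + H1 * f θ) := by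
  have : Fact (1 ≤ p) := ⟨HolderConjugate.one_le p q⟩
  have hψ : ∀ t : ℝ, HasDerivAt (fun t => H0 + H1 * f (θ + t • u))
      (H1 * dotCLM u (g (θ + t • u))) t := fun t => by
    rw [dotCLM_comm]
    exact ((hasDerivAt_comp_add_smul (hgrad _)).const_mul H1).const_add H0
  have hψ' : ∀ t : ℝ, HasDerivAt (fun t => H1 * dotCLM u (g (θ + t • u)))
      (H1 * dotCLM u (Hess (θ + t • u) *ᵥ u)) t := fun t =>
    ((dotCLM u).hasFDerivAt.comp_hasDerivAt t (hasDerivAt_comp_add_smul (hhess _))).const_mul H1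
  have hψ'' : ∀ t : ℝ, H1 * dotCLM u (Hess (θ + t • u) *ᵥ u) ≤
      (√H1 * lpNorm p u) ^ 2 * (H0 + H1 * f (θ + t • u)) := fun t => by
    rw [mul_pow, sq_sqrt hH1]
    calc H1 * dotCLM u (Hess (θ + t • u) *ᵥ u)
        ≤ H1 * (opNorm p q (Hess (θ + t • u)) * lpNorm p u ^ 2) :=
          mul_le_mul_of_nonneg_left (dotCLM_mulVec_le_opNorm_mul_sq _ u) hH1
      _ ≤ H1 * ((H0 + H1 * f (θ + t • u)) * lpNorm p u ^ 2) := by gcongr; exact hnus _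
      _ = H1 * lpNorm p u ^ 2 * (H0 + H1 * f (θ + t • u)) := by ring
  have := deriv_le_mul_of_nonneg_of_deriv2_le (mul_nonneg (sqrt_nonneg H1) (lpNorm_nonneg u))
    (fun t _ => hψ t) (fun t _ => hψ' t) (fun t _ => add_nonneg hH0 (mul_nonneg hH1 (hfnn _)))
    (fun t _ => hψ'' t)
  simpa [dotCLM_comm] using this

theorem add_mul_le_mul_exp_of_opNorm_hessian_le [p.HolderConjugate q] (hfnn : ∀ θ, 0 ≤ f θ)
    (hgrad : ∀ θ, HasFDerivAt f (dotCLM (g θ)) θ)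
    (hhess : ∀ θ, HasFDerivAt g (mulVecCLM (Hess θ)) θ) (hH0 : 0 ≤ H0) (hH1 : 0 ≤ H1)
    (hnus : ∀ θ, opNorm p q (Hess θ) ≤ H0 + H1 * f θ) (x z : Fin D → ℝ) :
    H0 + H1 * f z ≤ (H0 + H1 * f x) * exp (√H1 * lpNorm p (z - x)) := by
  set b := √H1 * lpNorm p (z - x)
  have hanti := antitoneOn_mul_exp_neg_of_deriv_le (c := b) (convex_Ici 0)
    (fun t _ => ((hasDerivAt_comp_add_smul (θ := x) (hgrad _)).const_mul H1).const_add H0)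
    (fun t _ => mul_dotCLM_le_of_opNorm_hessian_le hfnn hgrad hhess hH0 hH1 hnus _ _)
  have := hanti self_mem_Ici (mem_Ici.mpr zero_le_one) zero_le_one
  simp only [one_smul, add_sub_cancel, mul_one, zero_smul, add_zero, mul_zero, neg_zero,
    exp_zero] at this
  rwa [exp_neg, ← div_eq_mul_inv, div_le_iff₀ (exp_pos _)] at this

theorem lpNorm_sub_le_of_lpNorm_mulVec_le [Fact (1 ≤ q)]
    (hhess : ∀ θ, HasFDerivAt g (mulVecCLM (Hess θ)) θ) (x y : Fin D → ℝ) {C : ℝ}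
    (hC : ∀ t ∈ Icc (0 : ℝ) 1, lpNorm q (Hess (x + t • (y - x)) *ᵥ (y - x)) ≤ C) :
    lpNorm q (g y - g x) ≤ C := by
  have hG : ∀ t : ℝ, HasDerivAt (fun t => WithLp.toLp q (g (x + t • (y - x))))
      (WithLp.toLp q (Hess (x + t • (y - x)) *ᵥ (y - x))) t := fun t =>
    (PiLp.continuousLinearEquiv q ℝ (fun _ : Fin D => ℝ)).symm.hasFDerivAt.comp_hasDerivAt t
      (hasDerivAt_comp_add_smul (hhess _))
  simpa [lpNorm_eq_norm_toLp] using norm_image_sub_le_of_norm_deriv_le_segment_01'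
    (fun t _ => (hG t).hasDerivWithinAt) fun t ht => hC t (Ico_subset_Icc_self ht)

end Smoothness

theorem stmt4_general {D : ℕ} (p q : ENNReal) (hpq : 1/p + 1/q = 1)
    (f : (Fin D → ℝ) → ℝ) (g : (Fin D → ℝ) → (Fin D → ℝ))
    (Hess : (Fin D → ℝ) → Matrix (Fin D) (Fin D) ℝ)
    (hfnn : ∀ θ, 0 ≤ f θ)
    (hgrad : ∀ θ, HasFDerivAt f (dotCLM (g θ)) θ)
    (hhess : ∀ θ, HasFDerivAt g (mulVecCLM (Hess θ)) θ)
    (H0 H1 : ℝ) (hH0 : 0 ≤ H0) (hH1 : 0 ≤ H1)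
    (hnus : ∀ θ, opNorm p q (Hess θ) ≤ H0 + H1 * f θ) :
    ∀ x y, lpNorm p (y - x) ≤ 1 / Real.sqrt H1 →
      lpNorm q (g y - g x) ≤ Real.exp 1 * (H0 + H1 * f x) * lpNorm p (y - x) := by
  intro x y hxy
  have : p.HolderConjugate q := ⟨by simpa only [one_div, inv_one] using hpq⟩
  have : Fact (1 ≤ p) := ⟨HolderConjugate.one_le p q⟩
  have : Fact (1 ≤ q) := ⟨HolderConjugate.one_le q p⟩
  set L := lpNorm p (y - x)
  have hL : 0 ≤ L := lpNorm_nonneg _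
  have hb : √H1 * L ≤ 1 := by
    rcases (sqrt_nonneg H1).eq_or_lt with h | h
    · simp [← h]
    · rwa [le_div_iff₀' h] at hxy
  refine lpNorm_sub_le_of_lpNorm_mulVec_le hhess x y fun t ht => ?_
  set z := x + t • (y - x)
  have hz : √H1 * lpNorm p (z - x) ≤ 1 := by
    rw [add_sub_cancel_left, lpNorm_smul, abs_of_nonneg ht.1, mul_left_comm]
    exact mul_le_one₀ ht.2 (mul_nonneg (sqrt_nonneg H1) hL) hb
  have hFx : 0 ≤ H0 + H1 * f x := add_nonneg hH0 (mul_nonneg hH1 (hfnn x))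
  calc lpNorm q (Hess z *ᵥ (y - x)) ≤ opNorm p q (Hess z) * L := lpNorm_mulVec_le_opNorm_mul _ _
    _ ≤ (H0 + H1 * f z) * L := mul_le_mul_of_nonneg_right (hnus z) hL
    _ ≤ (H0 + H1 * f x) * exp (√H1 * lpNorm p (z - x)) * L := mul_le_mul_of_nonneg_right
        (add_mul_le_mul_exp_of_opNorm_hessian_le hfnn hgrad hhess hH0 hH1 hnus x z) hL
    _ ≤ (H0 + H1 * f x) * exp 1 * L := by gcongr
    _ = exp 1 * (H0 + H1 * f x) * L := by ring

theorem stmt4 {D : ℕ} (p q : ENNReal) (hp : 1 ≤ p) (hq : 1 ≤ q) (hpq : 1/p + 1/q = 1)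
    (f : (Fin D → ℝ) → ℝ) (g : (Fin D → ℝ) → (Fin D → ℝ))
    (Hess : (Fin D → ℝ) → Matrix (Fin D) (Fin D) ℝ)
    (hfnn : ∀ θ, 0 ≤ f θ)
    (hgrad : ∀ θ, HasFDerivAt f (dotCLM (g θ)) θ)
    (hhess : ∀ θ, HasFDerivAt g (mulVecCLM (Hess θ)) θ)
    (H0 H1 : ℝ) (hH0 : 0 ≤ H0) (hH1 : 0 ≤ H1)
    (hnus : ∀ θ, opNorm p q (Hess θ) ≤ H0 + H1 * f θ) :
    ∀ x y, lpNorm p (y - x) ≤ 1 / Real.sqrt H1 →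
      lpNorm q (g y - g x) ≤ Real.exp 1 * (H0 + H1 * f x) * lpNorm p (y - x) :=
  stmt4_general p q hpq f g Hess hfnn hgrad hhess H0 H1 hH0 hH1 hnus
end

section
/- Let f : ℝᴰ → ℝ be twice differentiable and nonnegative, with ‖∇²f(θ)‖_{p→q} ≤ H₀ + H₁·f(θ) for all θ (H₀, H₁ ≥ 0, 1/p + 1/q = 1). Then for all x, y with ‖y − x‖_p ≤ 1/√H₁: f(y) ≤ f(x) + ⟨∇f(x), y − x⟩ + (H₀ + H₁·f(x))·‖y − x‖_p². -/
open scoped BigOperators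

/-!
Along the segment, `φ t = f (x + t (y - x))` satisfies `φ'' ≤ (H₀ + H₁ φ) r²` with
`r = ‖y - x‖_p`, by Hölder's inequality and the definition of the operator norm. Hence
`ψ = φ + H₀ / H₁` is nonnegative on the whole line with `ψ'' ≤ c² ψ`, where `c = √H₁ r ≤ 1`.
Nonnegativity on the whole line forces `|ψ'| ≤ c ψ`: otherwise `ψ' + c ψ` stays below a negative
constant on a half-line and drives `ψ` below zero. By Grönwall `ψ t ≤ ψ 0 e^{ct}` for `t ≥ 0`,
and comparing `ψ` with `ψ 0 e^{ct}` to second order on `[0, 1]` gives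
`ψ 1 ≤ ψ 0 + ψ' 0 + ψ 0 (e^c - 1 - c) ≤ ψ 0 + ψ' 0 + c² ψ 0`.
-/

open Set Real Matrix
open AffineMap (lineMap hasDerivAt_lineMap)

section LpNorm

variable {ι κ : Type*} [Fintype ι] [Fintype κ]

theorem lpNorm_pos {p : ENNReal} [Fact (1 ≤ p)] {x : ι → ℝ} (hx : x ≠ 0) : 0 < lpNorm p x :=
  norm_pos_iff.2 fun h => hx (by simpa using congrArg WithLp.ofLp h)

theorem dotProduct_le_lpNorm_top_mul_lpNorm_one (u w : ι → ℝ) :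
    u ⬝ᵥ w ≤ lpNorm ⊤ u * lpNorm 1 w := by
  rw [lpNorm, lpNorm, PiLp.norm_eq_of_L1, Finset.mul_sum]
  refine Finset.sum_le_sum fun i _ => ?_
  calc u i * w i ≤ |u i| * |w i| := by rw [← abs_mul]; exact le_abs_self _
    _ ≤ _ := by
        gcongr
        · exact PiLp.norm_apply_le (WithLp.toLp ⊤ u) i
        · simp

theorem dotProduct_le_lpNorm_mul_lpNorm {p q : ENNReal} [p.HolderConjugate q] (u w : ι → ℝ) :
    u ⬝ᵥ w ≤ lpNorm p u * lpNorm q w := by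
  rcases eq_or_ne p ⊤ with rfl | hp
  · obtain rfl : q = 1 := (ENNReal.HolderConjugate.eq_top_iff_eq_one ⊤ q).1 rfl
    exact dotProduct_le_lpNorm_top_mul_lpNorm_one u w
  rcases eq_or_ne q ⊤ with rfl | hq
  · obtain rfl : p = 1 := (ENNReal.HolderConjugate.eq_top_iff_eq_one ⊤ p).1 rfl
    rw [dotProduct_comm, mul_comm]
    exact dotProduct_le_lpNorm_top_mul_lpNorm_one w u
  have hpq := ENNReal.HolderConjugate.toReal_of_ne_top hp hq
  rw [lpNorm, lpNorm, PiLp.norm_eq_sum hpq.pos, PiLp.norm_eq_sum hpq.symm.pos]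
  exact Real.inner_le_Lp_mul_Lq _ _ _ hpq

variable (p q : ENNReal) [Fact (1 ≤ p)] [Fact (1 ≤ q)]

noncomputable def Matrix.toLpCLM (A : Matrix ι κ ℝ) : WithLp p (κ → ℝ) →L[ℝ] WithLp q (ι → ℝ) :=
  LinearMap.toContinuousLinearMap <| (WithLp.linearEquiv q ℝ (ι → ℝ)).symm.toLinearMap ∘ₗ
    A.mulVecLin ∘ₗ (WithLp.linearEquiv p ℝ (κ → ℝ)).toLinearMap

theorem opNorm_eq_norm_toLpCLM (A : Matrix ι κ ℝ) : opNorm p q A = ‖A.toLpCLM p q‖ := by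
  rw [← (A.toLpCLM p q).sSup_unitClosedBall_eq_norm, opNorm]
  congr 1
  ext c
  constructor
  · rintro ⟨x, hx, rfl⟩
    exact ⟨WithLp.toLp p x, by simpa [lpNorm] using hx, rfl⟩
  · rintro ⟨x, hx, rfl⟩
    exact ⟨x.ofLp, by simpa [lpNorm] using hx, rfl⟩

theorem lpNorm_mulVec_le (A : Matrix ι κ ℝ) (v : κ → ℝ) :
    lpNorm q (A *ᵥ v) ≤ opNorm p q A * lpNorm p v := by
  rw [opNorm_eq_norm_toLpCLM]
  exact (A.toLpCLM p q).le_opNorm (WithLp.toLp p v)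

theorem dotProduct_mulVec_le [q.HolderConjugate p] (A : Matrix ι ι ℝ) (v : ι → ℝ) :
    A *ᵥ v ⬝ᵥ v ≤ opNorm p q A * lpNorm p v ^ 2 := by
  calc A *ᵥ v ⬝ᵥ v ≤ lpNorm q (A *ᵥ v) * lpNorm p v := dotProduct_le_lpNorm_mul_lpNorm _ _
    _ ≤ opNorm p q A * lpNorm p v * lpNorm p v := by
        gcongr
        · exact norm_nonneg _
        · exact lpNorm_mulVec_le p q A v
    _ = opNorm p q A * lpNorm p v ^ 2 := by ring

end LpNorm

section Comparison

variable {F F' F'' G G' G'' : ℝ → ℝ}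

theorem sub_le_sub_of_deriv_le {a b : ℝ} (hab : a ≤ b) (hF : ∀ t, HasDerivAt F (F' t) t)
    (hG : ∀ t, HasDerivAt G (G' t) t) (h : ∀ t ∈ Ioo a b, F' t ≤ G' t) :
    F b - F a ≤ G b - G a := by
  have hmono : MonotoneOn (fun t => G t - F t) (Icc a b) :=
    monotoneOn_of_hasDerivWithinAt_nonneg (f' := fun t => G' t - F' t) (convex_Icc a b)
      (fun t _ => ((hG t).sub (hF t)).continuousAt.continuousWithinAt)
      (fun t _ => ((hG t).sub (hF t)).hasDerivWithinAt)
      (by rw [interior_Icc]; exact fun t ht => sub_nonneg.2 (h t ht))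
  have := hmono (left_mem_Icc.2 hab) (right_mem_Icc.2 hab) hab
  linarith

theorem sub_sub_deriv_le_of_deriv2_le {a b : ℝ} (hab : a ≤ b)
    (hF : ∀ t, HasDerivAt F (F' t) t) (hF' : ∀ t, HasDerivAt F' (F'' t) t)
    (hG : ∀ t, HasDerivAt G (G' t) t) (hG' : ∀ t, HasDerivAt G' (G'' t) t)
    (h : ∀ t ∈ Ioo a b, F'' t ≤ G'' t) :
    F b - F a - F' a * (b - a) ≤ G b - G a - G' a * (b - a) := by
  have hderiv : ∀ t ∈ Ioo a b, F' t - F' a ≤ G' t - G' a := fun t ht =>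
    sub_le_sub_of_deriv_le ht.1.le hF' hG' fun s hs => h s ⟨hs.1, hs.2.trans ht.2⟩
  have := sub_le_sub_of_deriv_le hab
    (F := fun t => F t - F' a * t) (G := fun t => G t - G' a * t)
    (fun t => (hF t).sub ((hasDerivAt_id' t).const_mul _))
    (fun t => (hG t).sub ((hasDerivAt_id' t).const_mul _)) (by simpa using hderiv)
  linear_combination this

theorem le_mul_exp_of_deriv_le_mul {c t : ℝ} (hF : ∀ t, HasDerivAt F (F' t) t)
    (hbd : ∀ t, F' t ≤ c * F t) (ht : 0 ≤ t) : F t ≤ F 0 * exp (c * t) := by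
  have := le_gronwallBound_of_liminf_deriv_right_le (ε := 0)
    (fun s _ => (hF s).continuousAt.continuousWithinAt)
    (fun s _ r hr => (hF s).hasDerivWithinAt.liminf_right_slope_le hr) le_rfl
    (fun s _ => by simpa using hbd s) t ⟨ht, le_rfl⟩
  simpa [gronwallBound_ε0] using this

end Comparison

section NonnegSolutions

variable {F F' F'' : ℝ → ℝ} {c : ℝ}

theorem neg_mul_le_deriv_zero_of_nonneg (hc : 0 ≤ c) (hF : ∀ t, HasDerivAt F (F' t) t)
    (hF' : ∀ t, HasDerivAt F' (F'' t) t) (hnn : ∀ t, 0 ≤ F t)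
    (hbd : ∀ t, F'' t ≤ c ^ 2 * F t) : -(c * F 0) ≤ F' 0 := by
  by_contra! hneg
  set v : ℝ → ℝ := fun t => F' t + c * F t
  have hv0 : v 0 < 0 := by simp only [v]; linarith
  have hv : ∀ t, 0 ≤ t → v t ≤ v 0 := fun t ht => by
    have := le_mul_exp_of_deriv_le_mul (F := v) (c := c)
      (fun t => (hF' t).add ((hF t).const_mul c)) (fun s => by nlinarith [hbd s]) ht
    nlinarith [one_le_exp (mul_nonneg hc ht)]
  have hF'v : ∀ t, 0 ≤ t → F' t ≤ v 0 := fun t ht => by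
    have := hv t ht
    simp only [v] at this
    nlinarith [hnn t]
  set T := F 0 / -v 0 + 1
  have hT : 0 ≤ T := by
    have := hnn 0
    have : 0 < -v 0 := by linarith
    positivity
  have := sub_le_sub_of_deriv_le hT hF (fun t => (hasDerivAt_id' t).const_mul (v 0))
    fun t ht => by simpa using hF'v t ht.1.le
  have hvT : v 0 * T = -F 0 + v 0 := by simp only [T]; field_simp [hv0.ne]
  linarith [hnn T]

theorem deriv_le_mul_of_nonneg (hc : 0 ≤ c) (hF : ∀ t, HasDerivAt F (F' t) t)
    (hF' : ∀ t, HasDerivAt F' (F'' t) t) (hnn : ∀ t, 0 ≤ F t)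
    (hbd : ∀ t, F'' t ≤ c ^ 2 * F t) (s : ℝ) : F' s ≤ c * F s := by
  have hrefl : ∀ t, HasDerivAt (fun τ => s - τ) (-1) t := fun t => by
    simpa using (hasDerivAt_id t).const_sub s
  have := neg_mul_le_deriv_zero_of_nonneg hc (F := fun t => F (s - t))
    (fun t => ((hF (s - t)).comp t (hrefl t)).congr_deriv (mul_neg_one _))
    (fun t => ((hF' (s - t)).comp t (hrefl t)).neg.congr_deriv (by rw [mul_neg_one, neg_neg]))
    (fun t => hnn _) (fun t => hbd _)
  simpa using this

theorem apply_one_le_of_deriv2_le_sq_mul (hc : 0 ≤ c) (hc1 : c ≤ 1)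
    (hF : ∀ t, HasDerivAt F (F' t) t) (hF' : ∀ t, HasDerivAt F' (F'' t) t)
    (hnn : ∀ t, 0 ≤ F t) (hbd : ∀ t, F'' t ≤ c ^ 2 * F t) :
    F 1 ≤ F 0 + F' 0 + c ^ 2 * F 0 := by
  have hgrowth : ∀ t, 0 ≤ t → F t ≤ F 0 * exp (c * t) := fun t =>
    le_mul_exp_of_deriv_le_mul hF (deriv_le_mul_of_nonneg hc hF hF' hnn hbd)
  have hexp : ∀ t, HasDerivAt (fun t => exp (c * t)) (exp (c * t) * c) t := fun t => by
    simpa using ((hasDerivAt_id t).const_mul c).exp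
  have hcmp := sub_sub_deriv_le_of_deriv2_le zero_le_one hF hF'
    (fun t => (hexp t).const_mul (F 0)) (fun t => ((hexp t).mul_const c).const_mul (F 0))
    fun t ht => by nlinarith [hbd t, hgrowth t ht.1.le, sq_nonneg c]
  have hc2 : exp c - 1 - c ≤ c ^ 2 :=
    (abs_le.1 (abs_exp_sub_one_sub_id_le (by rwa [abs_of_nonneg hc]))).2
  have := mul_le_mul_of_nonneg_left hc2 (hnn 0)
  simp only [mul_zero, exp_zero, mul_one] at hcmp
  linarith

end NonnegSolutions

section LineRestriction

variable {n : ℕ}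

theorem dotCLM_apply_s5 (v w : Fin n → ℝ) : dotCLM v w = v ⬝ᵥ w := by
  simp [dotCLM, dotProduct]

variable {f : (Fin n → ℝ) → ℝ} {g : (Fin n → ℝ) → (Fin n → ℝ)}
  {Hess : (Fin n → ℝ) → Matrix (Fin n) (Fin n) ℝ}

theorem hasDerivAt_comp_lineMap_of_hasFDerivAt_dotCLM
    (hgrad : ∀ θ, HasFDerivAt f (dotCLM (g θ)) θ) (x y : Fin n → ℝ) (t : ℝ) :
    HasDerivAt (fun s => f (lineMap x y s)) (g (lineMap x y t) ⬝ᵥ (y - x)) t :=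
  ((hgrad _).comp_hasDerivAt t hasDerivAt_lineMap).congr_deriv (dotCLM_apply_s5 _ _)

theorem hasDerivAt_dotProduct_comp_lineMap_of_hasFDerivAt_mulVecCLM
    (hhess : ∀ θ, HasFDerivAt g (mulVecCLM (Hess θ)) θ) (x y : Fin n → ℝ) (t : ℝ) :
    HasDerivAt (fun s => g (lineMap x y s) ⬝ᵥ (y - x))
      (Hess (lineMap x y t) *ᵥ (y - x) ⬝ᵥ (y - x)) t := by
  have h := (dotCLM (y - x)).hasFDerivAt.comp_hasDerivAt t
    ((hhess _).comp_hasDerivAt t (hasDerivAt_lineMap (a := x) (b := y)))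
  simp only [Function.comp_def, dotCLM_apply_s5, dotProduct_comm (y - x)] at h
  exact h

end LineRestriction

theorem apply_one_le_of_deriv2_le_affine {φ φ' φ'' : ℝ → ℝ} {H0 H1 r : ℝ} (hH0 : 0 ≤ H0)
    (hH1 : 0 < H1) (hr : 0 ≤ r) (hr1 : √H1 * r ≤ 1) (hφ : ∀ t, HasDerivAt φ (φ' t) t)
    (hφ' : ∀ t, HasDerivAt φ' (φ'' t) t) (hnn : ∀ t, 0 ≤ φ t)
    (hbd : ∀ t, φ'' t ≤ (H0 + H1 * φ t) * r ^ 2) :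
    φ 1 ≤ φ 0 + φ' 0 + (H0 + H1 * φ 0) * r ^ 2 := by
  have hc2 : (√H1 * r) ^ 2 = H1 * r ^ 2 := by rw [mul_pow, sq_sqrt hH1.le]
  have hshift : ∀ t, (H0 + H1 * φ t) * r ^ 2 = (√H1 * r) ^ 2 * (φ t + H0 / H1) := fun t => by
    rw [hc2]; field_simp; ring
  have := apply_one_le_of_deriv2_le_sq_mul (F := fun t => φ t + H0 / H1) (by positivity) hr1
    (fun t => (hφ t).add_const _) hφ' (fun t => by have := hnn t; positivity)
    (fun t => (hbd t).trans_eq (hshift t))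
  linarith [hshift 0]

theorem stmt5_general {D : ℕ} (p q : ENNReal) (hp : 1 ≤ p) (hq : 1 ≤ q) (hpq : 1/p + 1/q = 1)
    (f : (Fin D → ℝ) → ℝ) (g : (Fin D → ℝ) → (Fin D → ℝ))
    (Hess : (Fin D → ℝ) → Matrix (Fin D) (Fin D) ℝ)
    (hfnn : ∀ θ, 0 ≤ f θ)
    (hgrad : ∀ θ, HasFDerivAt f (dotCLM (g θ)) θ)
    (hhess : ∀ θ, HasFDerivAt g (mulVecCLM (Hess θ)) θ)
    (H0 H1 : ℝ) (hH0 : 0 ≤ H0)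
    (hnus : ∀ θ, opNorm p q (Hess θ) ≤ H0 + H1 * f θ) :
    ∀ x y, lpNorm p (y - x) ≤ 1 / Real.sqrt H1 →
      f y ≤ f x + (∑ i, g x i * (y i - x i)) + (H0 + H1 * f x) * (lpNorm p (y - x)) ^ 2 := by
  intro x y hr
  have : Fact (1 ≤ p) := ⟨hp⟩
  have : Fact (1 ≤ q) := ⟨hq⟩
  have : q.HolderConjugate p :=
    ENNReal.holderConjugate_iff.2 (by simpa only [one_div, add_comm] using hpq)
  rcases eq_or_ne y x with rfl | hxy
  · simp [lpNorm]
  have hr0 : 0 < lpNorm p (y - x) := lpNorm_pos (sub_ne_zero.2 hxy)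
  -- `1 / √H1 = 0` unless `0 < H1`, so a nonzero step forces `0 < H1`
  have hH1 : 0 < H1 := sqrt_pos.1 (one_div_pos.1 (hr0.trans_le hr))
  have hr1 : √H1 * lpNorm p (y - x) ≤ 1 := by
    rwa [le_div_iff₀ (sqrt_pos.2 hH1), mul_comm] at hr
  have := apply_one_le_of_deriv2_le_affine hH0 hH1 hr0.le hr1
    (hasDerivAt_comp_lineMap_of_hasFDerivAt_dotCLM hgrad x y)
    (hasDerivAt_dotProduct_comp_lineMap_of_hasFDerivAt_mulVecCLM hhess x y) (fun t => hfnn _)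
    fun t => (dotProduct_mulVec_le p q _ _).trans (by gcongr; exact hnus _)
  simpa [dotProduct] using this

theorem stmt5 {D : ℕ} (p q : ENNReal) (hp : 1 ≤ p) (hq : 1 ≤ q) (hpq : 1/p + 1/q = 1)
    (f : (Fin D → ℝ) → ℝ) (g : (Fin D → ℝ) → (Fin D → ℝ))
    (Hess : (Fin D → ℝ) → Matrix (Fin D) (Fin D) ℝ)
    (hfnn : ∀ θ, 0 ≤ f θ)
    (hgrad : ∀ θ, HasFDerivAt f (dotCLM (g θ)) θ)
    (hhess : ∀ θ, HasFDerivAt g (mulVecCLM (Hess θ)) θ)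
    (H0 H1 : ℝ) (hH0 : 0 ≤ H0) (hH1 : 0 ≤ H1)
    (hnus : ∀ θ, opNorm p q (Hess θ) ≤ H0 + H1 * f θ) :
    ∀ x y, lpNorm p (y - x) ≤ 1 / Real.sqrt H1 →
      f y ≤ f x + (∑ i, g x i * (y i - x i)) + (H0 + H1 * f x) * (lpNorm p (y - x)) ^ 2 :=
  stmt5_general p q hp hq hpq f g Hess hfnn hgrad hhess H0 H1 hH0 hnus
end
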